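/- arXiv:2304.05306 — 2 statements merged into one kernel-verified Lean document; each statement's English description precedes it below -/
import Mathlib

section
/- Let C be a k-dimensional ZMod 2-linear subspace of (Fin n → ZMod 2), let p : Fin n → ℝ with 0 ≤ p i ≤ 1 be coordinate 1-probabilities, let x_max be the most probable vector for p, and set δ_max = max_{i} |1/2 − p i|. Let q : Fin n → ℝ be the constant probability vector with q i = 1/2 − δ_max for all i. Then P_q[C] ≥ P_p[x_max + C]; that is, the probability of the set of codewords under the identically distributed worst-case bias δ_max is at least the probability of the most probable coset under the original (possibly non-identical) distributions. -/
/-!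
Translating by `xmax` flips exactly the bits with `p i ≥ 1/2`, so the coset probability under `p`
is the code probability under `1/2 - δ i` with `δ i = |1/2 - p i|`. Writing each bit probability as
`1/2 + (-1)^b δ i` and expanding the product, the probability of a linear code becomes a polynomial
in the `δ i` whose coefficient at a monomial `∏ i ∈ T, δ i` is the sum over the code of the
character `c ↦ ∏ i ∈ T, (-1)^(c i)`, hence `|C|` or `0`. A polynomial with nonnegative
coefficients is monotone on the nonnegative orthant, and `δ i ≤ δmax`.
-/

open Finset

open Classical in
/-- Probability of a set of bit-vectors under independent, not necessarily identically
distributed bits with coordinate 1-probabilities `p`. -/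
noncomputable def probOf {n : ℕ} (p : Fin n → ℝ) (S : Set (Fin n → ZMod 2)) : ℝ :=
  ∑ x : Fin n → ZMod 2,
    if x ∈ S then (∏ i, if x i = 1 then p i else 1 - p i) else 0

lemma zmod_two_eq_zero_or_eq_one (b : ZMod 2) : b = 0 ∨ b = 1 := by decide +revert

lemma AddChar.sum_nonneg {A R : Type*} [AddGroup A] [Fintype A] [CommSemiring R] [IsDomain R]
    [PartialOrder R] [IsOrderedRing R] (ψ : AddChar A R) : 0 ≤ ∑ a, ψ a := by
  classical
  rw [AddChar.sum_eq_ite]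
  split_ifs <;> positivity

noncomputable def signChar : AddChar (ZMod 2) ℝ :=
  AddChar.zmodChar 2 (by norm_num : (-1 : ℝ) ^ 2 = 1)

lemma signChar_one : signChar 1 = -1 := by
  norm_num [signChar, AddChar.zmodChar_apply, ZMod.val_one]

lemma ite_eq_signChar_mul_add_half (b : ZMod 2) (r : ℝ) :
    (if b = 1 then r else 1 - r) = signChar b * (1 / 2 - r) + 1 / 2 := by
  rcases zmod_two_eq_zero_or_eq_one b with rfl | rfl
  · rw [if_neg zero_ne_one, AddChar.map_zero_eq_one]; ring
  · rw [if_pos rfl, signChar_one]; ring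

lemma sum_prod_signChar_nonneg {ι : Type*} (C : Submodule (ZMod 2) (ι → ZMod 2)) [Fintype C]
    (T : Finset ι) : 0 ≤ ∑ c : C, ∏ i ∈ T, signChar ((c : ι → ZMod 2) i) := by
  simpa [AddChar.sum_apply] using AddChar.sum_nonneg
    (∑ i ∈ T, signChar.compAddMonoidHom ((Pi.evalAddMonoidHom (fun _ => ZMod 2) i).comp
      C.subtype.toAddMonoidHom))

lemma probOf_image_add_left {n : ℕ} (p : Fin n → ℝ) (a : Fin n → ZMod 2)
    (S : Set (Fin n → ZMod 2)) :
    probOf p ((a + ·) '' S) = probOf (fun i => if a i = 1 then 1 - p i else p i) S := by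
  classical
  rw [probOf, probOf, ← _root_.Equiv.sum_comp (Equiv.addLeft a)]
  refine sum_congr rfl fun x _ => ?_
  simp only [Equiv.coe_addLeft, (add_right_injective a).mem_set_image]
  refine if_congr Iff.rfl (prod_congr rfl fun i _ => ?_) rfl
  rcases zmod_two_eq_zero_or_eq_one (a i) with h | h <;>
    rcases zmod_two_eq_zero_or_eq_one (x i) with h' | h' <;> simp [h, h']

open Classical in
lemma probOf_submodule_eq_sum_powerset {n : ℕ} (C : Submodule (ZMod 2) (Fin n → ZMod 2))
    (p : Fin n → ℝ) :
    probOf p C = ∑ T ∈ univ.powerset, (∑ c : C, ∏ i ∈ T, signChar ((c : Fin n → ZMod 2) i)) *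
      ((∏ i ∈ T, (1 / 2 - p i)) * ∏ _i ∈ univ \ T, (1 / 2 : ℝ)) := by
  classical
  calc probOf p C
      = ∑ c : C, ∏ i, (signChar ((c : Fin n → ZMod 2) i) * (1 / 2 - p i) + 1 / 2) := by
        simp only [probOf, ← sum_filter, ite_eq_signChar_mul_add_half]
        exact sum_subtype (p := (· ∈ C)) _ (fun x => by simp) _
    _ = ∑ c : C, ∑ T ∈ univ.powerset, (∏ i ∈ T, signChar ((c : Fin n → ZMod 2) i)) *
          ((∏ i ∈ T, (1 / 2 - p i)) * ∏ _i ∈ univ \ T, (1 / 2 : ℝ)) := by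
        simp only [prod_add, prod_mul_distrib, mul_assoc]
    _ = _ := by rw [sum_comm]; simp only [sum_mul]

lemma probOf_submodule_le_of_le {n : ℕ} (C : Submodule (ZMod 2) (Fin n → ZMod 2))
    {p q : Fin n → ℝ} (hqp : ∀ i, q i ≤ p i) (hp : ∀ i, p i ≤ 1 / 2) :
    probOf p C ≤ probOf q C := by
  classical
  rw [probOf_submodule_eq_sum_powerset, probOf_submodule_eq_sum_powerset]
  gcongr with T _ i
  · exact sum_prod_signChar_nonneg C T
  · exact fun i _ => sub_nonneg.2 (hp i)
  · exact hqp i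

lemma ite_mostProbableBit_eq_half_sub_abs (r : ℝ) :
    (if (if (1 : ℝ) / 2 ≤ r then (1 : ZMod 2) else 0) = 1 then 1 - r else r) =
      1 / 2 - |1 / 2 - r| := by
  by_cases h : (1 : ℝ) / 2 ≤ r
  · rw [if_pos h, if_pos rfl, abs_of_nonpos (by linarith)]; ring
  · rw [if_neg h, if_neg zero_ne_one, abs_of_pos (by linarith)]; ring

theorem worst_case_bias_dominates_general {n : ℕ}
    (C : Submodule (ZMod 2) (Fin n → ZMod 2))
    (p : Fin n → ℝ)
    (xmax : Fin n → ZMod 2)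
    (hxmax : ∀ i, xmax i = if (1 : ℝ) / 2 ≤ p i then 1 else 0)
    (δmax : ℝ)
    (hδ : IsGreatest (Set.range fun i => |1 / 2 - p i|) δmax) :
    probOf p ((xmax + ·) '' (C : Set _)) ≤
      probOf (fun _ : Fin n => 1 / 2 - δmax) (C : Set _) := by
  simp only [probOf_image_add_left, hxmax, ite_mostProbableBit_eq_half_sub_abs]
  exact probOf_submodule_le_of_le C (fun i => by linarith [hδ.2 ⟨i, rfl⟩])
    (fun i => by linarith [abs_nonneg (1 / 2 - p i)])

/-- The probability of the set of codewords under the identically distributed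
worst-case bias `δmax` is at least the probability of the most probable coset under the
original (possibly non-identical) distributions. -/
theorem worst_case_bias_dominates {n k : ℕ}
    (C : Submodule (ZMod 2) (Fin n → ZMod 2))
    (hk : Module.finrank (ZMod 2) C = k)
    (p : Fin n → ℝ) (hp : ∀ i, 0 ≤ p i ∧ p i ≤ 1)
    (xmax : Fin n → ZMod 2)
    (hxmax : ∀ i, xmax i = if (1 : ℝ) / 2 ≤ p i then 1 else 0)
    (δmax : ℝ)
    (hδ : IsGreatest (Set.range fun i => |1 / 2 - p i|) δmax) :
    probOf p ((xmax + ·) '' (C : Set _)) ≤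
      probOf (fun _ : Fin n => 1 / 2 - δmax) (C : Set _) :=
  worst_case_bias_dominates_general C p xmax hxmax δmax hδ
end

section
/- Let C be a ZMod 2-linear subspace of (Fin n → ZMod 2) that contains the standard unit vector 1_{l₀} (the vector of Hamming weight 1 with a 1 exactly in coordinate l₀). Then the probability of every coset of C is independent of the 1-probability of coordinate l₀: for any probability vectors p, p' : Fin n → ℝ with 0 ≤ p i, p' i ≤ 1 that agree at every coordinate except l₀, and for every vector a, P_p[a + C] = P_{p'}[a + C]. -/
lemma zmod2_cases (z : ZMod 2) : z = 0 ∨ z = 1 := by revert z; decide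

/-- If a binary linear code contains the standard unit vector with a `1` exactly
in coordinate `l₀`, then the probability of every coset is independent of the 1-probability
of coordinate `l₀`. -/
theorem coset_prob_independent_of_coordinate {n : ℕ}
    (C : Submodule (ZMod 2) (Fin n → ZMod 2))
    (l₀ : Fin n)
    (hunit : Pi.single l₀ 1 ∈ C)
    (p p' : Fin n → ℝ)
    (hp : ∀ i, 0 ≤ p i ∧ p i ≤ 1) (hp' : ∀ i, 0 ≤ p' i ∧ p' i ≤ 1)
    (hagree : ∀ j, j ≠ l₀ → p' j = p j)
    (a : Fin n → ZMod 2) :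
    probOf p ((a + ·) '' (C : Set _)) = probOf p' ((a + ·) '' (C : Set _)) := by
  classical
  set e : Fin n → ZMod 2 := Pi.single l₀ 1 with he
  have hee : ∀ v : Fin n → ZMod 2, v + e + e = v := by
    intro v; funext i
    have : e i + e i = 0 := CharTwo.add_self_eq_zero _
    simp only [Pi.add_apply]
    rw [add_assoc, this, add_zero]
  set S : Set (Fin n → ZMod 2) := (a + ·) '' (C : Set _) with hS
  have hmemS : ∀ x, x ∈ S → x + e ∈ S := by
    rintro x ⟨c, hc, rfl⟩
    exact ⟨c + e, C.add_mem hc hunit, by show a + (c + e) = a + c + e; rw [add_assoc]⟩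
  have hmem : ∀ x, x ∈ S ↔ x + e ∈ S := fun x =>
    ⟨hmemS x, fun h => by have := hmemS _ h; rwa [hee] at this⟩
  set w : (Fin n → ℝ) → (Fin n → ZMod 2) → ℝ :=
    fun q x => ∏ i, if x i = 1 then q i else 1 - q i with hw
  have key : ∀ q : Fin n → ℝ, ∀ x, w q x + w q (x + e) =
      ∏ i ∈ ({l₀}ᶜ : Finset (Fin n)), (if x i = 1 then q i else 1 - q i) := by
    intro q x
    have hx1 : ∀ i ∈ ({l₀}ᶜ : Finset (Fin n)), (x + e) i = x i := by
      intro i hi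
      simp only [Finset.mem_compl, Finset.mem_singleton] at hi
      simp [he, Pi.single_apply, hi]
    have h1 : w q x = (if x l₀ = 1 then q l₀ else 1 - q l₀) *
        ∏ i ∈ ({l₀}ᶜ : Finset (Fin n)), (if x i = 1 then q i else 1 - q i) :=
      Fintype.prod_eq_mul_prod_compl l₀ _
    have h2' : w q (x + e) = (if (x + e) l₀ = 1 then q l₀ else 1 - q l₀) *
        ∏ i ∈ ({l₀}ᶜ : Finset (Fin n)), (if (x + e) i = 1 then q i else 1 - q i) :=
      Fintype.prod_eq_mul_prod_compl l₀ _
    have h2 : w q (x + e) = (if (x + e) l₀ = 1 then q l₀ else 1 - q l₀) *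
        ∏ i ∈ ({l₀}ᶜ : Finset (Fin n)), (if x i = 1 then q i else 1 - q i) := by
      rw [h2']
      congr 1
      exact Finset.prod_congr rfl fun i hi => by rw [hx1 i hi]
    have hxe : (x + e) l₀ = x l₀ + 1 := by simp [he]
    rw [h1, h2, hxe]
    have d1 : (1 : ZMod 2) + 1 = 0 := by decide
    have d2 : (0 : ZMod 2) + 1 = 1 := by decide
    have d3 : (0 : ZMod 2) ≠ 1 := by decide
    rcases zmod2_cases (x l₀) with h | h <;> rw [h] <;>
      simp only [d1, d2, if_pos rfl, if_neg d3, if_true] <;> ring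
  have sum_shift : ∀ q : Fin n → ℝ, probOf q S =
      ∑ x : Fin n → ZMod 2, if x ∈ S then w q (x + e) else 0 := by
    intro q
    rw [probOf]
    refine (Fintype.sum_equiv (Equiv.addRight e)
      (fun x => if x ∈ S then w q (x + e) else 0)
      (fun x => if x ∈ S then w q x else 0) ?_).symm
    intro x
    simp only [Equiv.coe_addRight]
    exact if_congr (hmem x) rfl rfl
  have twice : ∀ q : Fin n → ℝ, 2 * probOf q S =
      ∑ x : Fin n → ZMod 2, if x ∈ S then
        (∏ i ∈ ({l₀}ᶜ : Finset (Fin n)), (if x i = 1 then q i else 1 - q i)) else 0 := by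
    intro q
    have : 2 * probOf q S = probOf q S +
        ∑ x : Fin n → ZMod 2, if x ∈ S then w q (x + e) else 0 := by
      rw [← sum_shift q]; ring
    rw [this, probOf, ← Finset.sum_add_distrib]
    refine Finset.sum_congr rfl fun x _ => ?_
    by_cases hx : x ∈ S
    · simp only [hx, if_true]; exact key q x
    · simp [hx]
  have hprod : ∀ x : Fin n → ZMod 2,
      (∏ i ∈ ({l₀}ᶜ : Finset (Fin n)), (if x i = 1 then p i else 1 - p i)) =
      ∏ i ∈ ({l₀}ᶜ : Finset (Fin n)), (if x i = 1 then p' i else 1 - p' i) := by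
    intro x
    refine Finset.prod_congr rfl fun i hi => ?_
    simp only [Finset.mem_compl, Finset.mem_singleton] at hi
    rw [hagree i hi]
  have := (twice p).trans ((Finset.sum_congr rfl fun x _ => by
      by_cases hx : x ∈ S
      · simp only [hx, if_true]; exact hprod x
      · simp [hx]).trans (twice p').symm)
  linarith
end
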